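/- arXiv:2603.27709 — 2 statements merged into one kernel-verified Lean document; each statement's English description precedes it below -/
import Mathlib

section
/- Let 𝒢 be a torsion class in mod-Λ. If f : A → B and g : B → D are strict morphisms (each factoring as a fibration followed by a cofibration), then g∘f : A → D is a strict morphism. -/
/-!
Common framework: a torsion class `𝒢` in `mod-Λ` is modelled as a predicate
`G : ModuleCat R → Prop` (closed under isomorphism, quotients and extensions).
Strict subobjects, fibrations, cofibrations, strict morphisms, pseudo-torsion
classes etc. follow the definitions of the paper.
-/

namespace PaperTC

variable {R : Type} [Ring R]

/-- Membership of a (type-level) module in a class of modules. -/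
def Mem (G : ModuleCat.{0} R → Prop) (M : Type) [AddCommGroup M] [Module R M] : Prop :=
  G (ModuleCat.of R M)

/-- `A` is a strict subobject of `M` (w.r.t. the torsion class `G`):
`A` lies in `G` and `A ⊓ B'` lies in `G` for every subobject `B'` of `M`. -/
def IsStrictSub (G : ModuleCat.{0} R → Prop) {M : Type} [AddCommGroup M] [Module R M]
    (A : Submodule R M) : Prop :=
  Mem G ↥A ∧ ∀ B' : Submodule R M, Mem G ↥B' → Mem G ↥(A ⊓ B')

/-- A fibration is a surjection whose kernel is a strict subobject of the source. -/
def IsFibration (G : ModuleCat.{0} R → Prop) {M N : Type} [AddCommGroup M] [Module R M]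
    [AddCommGroup N] [Module R N] (f : M →ₗ[R] N) : Prop :=
  Function.Surjective f ∧ IsStrictSub G (LinearMap.ker f)

/-- A strict morphism: kernel is a strict subobject of the source and image a
strict subobject of the target. -/
def IsStrictMorphism (G : ModuleCat.{0} R → Prop) {M N : Type} [AddCommGroup M] [Module R M]
    [AddCommGroup N] [Module R N] (f : M →ₗ[R] N) : Prop :=
  IsStrictSub G (LinearMap.ker f) ∧ IsStrictSub G (LinearMap.range f)

/-- `G` is a torsion class in `mod-Λ`. -/
structure IsTorsionClass (G : ModuleCat.{0} R → Prop) : Prop where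
  iso_closed : ∀ (M N : Type) [AddCommGroup M] [Module R M] [AddCommGroup N] [Module R N],
      (M ≃ₗ[R] N) → Mem G M → Mem G N
  zero_mem : ∀ (M : Type) [AddCommGroup M] [Module R M], Subsingleton M → Mem G M
  quot_closed : ∀ (M : Type) [AddCommGroup M] [Module R M] (N : Submodule R M),
      Mem G M → Mem G (M ⧸ N)
  ext_closed : ∀ (A B C : Type) [AddCommGroup A] [Module R A] [AddCommGroup B] [Module R B]
      [AddCommGroup C] [Module R C] (f : A →ₗ[R] B) (g : B →ₗ[R] C),
      Function.Injective f → Function.Surjective g →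
      LinearMap.range f = LinearMap.ker g → Mem G A → Mem G C → Mem G B

/-- A pseudo-torsion class `P` in the torsion class `G`: nonempty (contains zero
objects), closed under strict quotients and under strict extensions. -/
structure IsPseudoTorsionClass (G P : ModuleCat.{0} R → Prop) : Prop where
  subset : ∀ M : ModuleCat.{0} R, P M → G M
  zero_mem : ∀ (M : Type) [AddCommGroup M] [Module R M], Subsingleton M → Mem G M → Mem P M
  quot_closed : ∀ (M : Type) [AddCommGroup M] [Module R M] (A : Submodule R M),
      IsStrictSub G A → Mem P M → Mem P (M ⧸ A)
  ext_closed : ∀ (A B C : Type) [AddCommGroup A] [Module R A] [AddCommGroup B] [Module R B]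
      [AddCommGroup C] [Module R C] (f : A →ₗ[R] B) (g : B →ₗ[R] C),
      Function.Injective f → Function.Surjective g →
      LinearMap.range f = LinearMap.ker g → IsStrictSub G (LinearMap.range f) →
      Mem P A → Mem P C → Mem P B

/-- A pseudo-torsionfree class `Q` in the torsion class `G`. -/
structure IsPseudoTorsionFreeClass (G Q : ModuleCat.{0} R → Prop) : Prop where
  subset : ∀ M : ModuleCat.{0} R, Q M → G M
  zero_mem : ∀ (M : Type) [AddCommGroup M] [Module R M], Subsingleton M → Mem G M → Mem Q M
  sub_closed : ∀ (M : Type) [AddCommGroup M] [Module R M] (A : Submodule R M),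
      IsStrictSub G A → Mem Q M → Mem Q ↥A
  ext_closed : ∀ (A B C : Type) [AddCommGroup A] [Module R A] [AddCommGroup B] [Module R B]
      [AddCommGroup C] [Module R C] (f : A →ₗ[R] B) (g : B →ₗ[R] C),
      Function.Injective f → Function.Surjective g →
      LinearMap.range f = LinearMap.ker g → IsStrictSub G (LinearMap.range f) →
      Mem Q A → Mem Q C → Mem Q B

/-- `Y` lies in the right perpendicular class `X ⟂`: no nonzero strict morphism
from an object of `X` to `Y`. -/
def MemRightPerp (G X : ModuleCat.{0} R → Prop) (Y : Type) [AddCommGroup Y] [Module R Y] : Prop :=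
  Mem G Y ∧ ∀ M : ModuleCat.{0} R, X M → ∀ f : M →ₗ[R] Y, IsStrictMorphism G f → f = 0

/-- `M` lies in the left perpendicular class `⟂ Y`. -/
def MemLeftPerp (G Y : ModuleCat.{0} R → Prop) (M : Type) [AddCommGroup M] [Module R M] : Prop :=
  Mem G M ∧ ∀ N : ModuleCat.{0} R, Y N → ∀ f : M →ₗ[R] N, IsStrictMorphism G f → f = 0

/-- A pseudo-wide subcategory `W` of `G`. -/
structure IsPseudoWide (G W : ModuleCat.{0} R → Prop) : Prop where
  subset : ∀ M : ModuleCat.{0} R, W M → G M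
  zero_mem : ∀ (M : Type) [AddCommGroup M] [Module R M], Subsingleton M → Mem G M → Mem W M
  kic : ∀ (A B : Type) [AddCommGroup A] [Module R A] [AddCommGroup B] [Module R B],
      Mem W A → Mem W B → ∀ f : A →ₗ[R] B, IsStrictMorphism G f →
      Mem W ↥(LinearMap.ker f) ∧ Mem W ↥(LinearMap.range f) ∧
        Mem W (B ⧸ LinearMap.range f)
  ext_closed : ∀ (A B C : Type) [AddCommGroup A] [Module R A] [AddCommGroup B] [Module R B]
      [AddCommGroup C] [Module R C] (f : A →ₗ[R] B) (g : B →ₗ[R] C),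
      Function.Injective f → Function.Surjective g →
      LinearMap.range f = LinearMap.ker g → IsStrictSub G (LinearMap.range f) →
      Mem W A → Mem W C → Mem W B

/-- A stability condition: a real-valued function on modules, invariant under
isomorphism and additive on short exact sequences of finitely generated modules
(this is exactly a functional on `K₀Λ` applied to dimension vectors). -/
structure StabilityCondition (R : Type) [Ring R] : Type 1 where
  val : ModuleCat.{0} R → ℝ
  iso_inv : ∀ (M N : ModuleCat.{0} R), (↥M ≃ₗ[R] ↥N) → val M = val N
  additive : ∀ (M : ModuleCat.{0} R), Module.Finite R ↥M → ∀ A : Submodule R ↥M,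
      val (ModuleCat.of R ↥A) + val (ModuleCat.of R (↥M ⧸ A)) = val M

/-- The value `θ(M)` of a stability condition on a module. -/
def StabilityCondition.app (θ : StabilityCondition R) (M : Type) [AddCommGroup M]
    [Module R M] : ℝ :=
  θ.val (ModuleCat.of R M)

/-- `𝒫(θ)`: objects which are zero, or on which `θ` is positive together with
all nonzero strict quotients. -/
def memP (G : ModuleCat.{0} R → Prop) (θ : StabilityCondition R)
    (M : Type) [AddCommGroup M] [Module R M] : Prop :=
  Mem G M ∧ (Subsingleton M ∨ (0 < θ.app M ∧
    ∀ A : Submodule R M, IsStrictSub G A → A ≠ ⊤ → 0 < θ.app (M ⧸ A)))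

/-- `𝒫̄(θ)`: `θ` is nonnegative on the object and all its strict quotients. -/
def memPbar (G : ModuleCat.{0} R → Prop) (θ : StabilityCondition R)
    (M : Type) [AddCommGroup M] [Module R M] : Prop :=
  Mem G M ∧ 0 ≤ θ.app M ∧ ∀ A : Submodule R M, IsStrictSub G A → 0 ≤ θ.app (M ⧸ A)

/-- `𝒬(θ)`: objects which are zero, or on which `θ` is negative together with
all nonzero strict subobjects. -/
def memQ (G : ModuleCat.{0} R → Prop) (θ : StabilityCondition R)
    (M : Type) [AddCommGroup M] [Module R M] : Prop :=
  Mem G M ∧ (Subsingleton M ∨ (θ.app M < 0 ∧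
    ∀ A : Submodule R M, IsStrictSub G A → A ≠ ⊥ → θ.app ↥A < 0))

/-- `𝒬̄(θ)`: `θ` is nonpositive on the object and all its strict subobjects. -/
def memQbar (G : ModuleCat.{0} R → Prop) (θ : StabilityCondition R)
    (M : Type) [AddCommGroup M] [Module R M] : Prop :=
  Mem G M ∧ θ.app M ≤ 0 ∧ ∀ A : Submodule R M, IsStrictSub G A → θ.app ↥A ≤ 0

/-- `𝒲(θ)`: θ-semistable objects of `G`; equivalently `θ ∈ D_𝒢(M)`. -/
def memW (G : ModuleCat.{0} R → Prop) (θ : StabilityCondition R)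
    (M : Type) [AddCommGroup M] [Module R M] : Prop :=
  Mem G M ∧ θ.app M = 0 ∧ ∀ A : Submodule R M, IsStrictSub G A → θ.app ↥A ≤ 0

/-- `𝒲₀(θ)`: objects of `𝒲(θ)` with no proper nonzero strict subobject in `𝒲(θ)`. -/
def memW0 (G : ModuleCat.{0} R → Prop) (θ : StabilityCondition R)
    (M : Type) [AddCommGroup M] [Module R M] : Prop :=
  memW G θ M ∧ ∀ A : Submodule R M, IsStrictSub G A → memW G θ ↥A → A = ⊥ ∨ A = ⊤

/-- The linear path `θ_t = t·θ₁ + (1-t)·θ₀` in the stability space. -/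
def lineSeg (θ₀ θ₁ : StabilityCondition R) (t : ℝ) : StabilityCondition R where
  val M := t * θ₁.val M + (1 - t) * θ₀.val M
  iso_inv M N e := by try simp only []
                      rw [θ₁.iso_inv M N e, θ₀.iso_inv M N e]
  additive M hM A := by
    have h1 := θ₁.additive M hM A
    have h0 := θ₀.additive M hM A
    try simp only []
    linear_combination t * h1 + (1 - t) * h0

/-- A smooth green path in the stability space. -/
structure IsGreenPath (G : ModuleCat.{0} R → Prop) (θ : ℝ → StabilityCondition R) : Prop where
  smooth : ∀ M : ModuleCat.{0} R, ContDiff ℝ (⊤ : ℕ∞) fun t => (θ t).val M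
  green : ∀ (t : ℝ) (M : ModuleCat.{0} R), ¬Subsingleton ↥M → memW G (θ t) ↥M →
      0 < deriv (fun s => (θ s).val M) t
  eventually_pos : ∃ T : ℝ, ∀ t : ℝ, T < t → ∀ M : ModuleCat.{0} R, G M →
      ¬Subsingleton ↥M → 0 < (θ t).val M
  eventually_neg : ∃ T : ℝ, ∀ t : ℝ, t < T → ∀ M : ModuleCat.{0} R, G M →
      ¬Subsingleton ↥M → (θ t).val M < 0

/-- A filtration `M = c 0 ⊃ c 1 ⊃ ⋯ ⊃ c m = 0` by strict subobjects whose
subquotients `c k / c (k+1)` lie in the slices `W (t k)` with `t` strictly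
decreasing. -/
def IsSliceFiltration (G : ModuleCat.{0} R → Prop) {S : Type} [Preorder S]
    (W : S → ModuleCat.{0} R → Prop) {M : Type} [AddCommGroup M] [Module R M]
    (m : ℕ) (t : Fin m → S) (c : Fin (m + 1) → Submodule R M) : Prop :=
  c 0 = ⊤ ∧ c (Fin.last m) = ⊥ ∧ StrictAnti c ∧ StrictAnti t ∧
  (∀ i, IsStrictSub G (c i)) ∧
  ∀ k : Fin m, W (t k) (ModuleCat.of R
    (↥(c k.castSucc) ⧸ Submodule.comap (c k.castSucc).subtype (c k.succ)))

/-- A strict HN-stratification of `G`: slices are pseudo-wide subcategories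
indexed by a totally ordered set, with no nonzero strict morphisms backwards,
such that every object of `G` has a strict filtration with subquotients in
decreasing slices. -/
structure IsHNStratification (G : ModuleCat.{0} R → Prop) {S : Type} [LinearOrder S]
    (W : S → ModuleCat.{0} R → Prop) : Prop where
  wide : ∀ s : S, IsPseudoWide G (W s)
  no_backward : ∀ s₀ s₁ : S, s₀ < s₁ → ∀ X Y : ModuleCat.{0} R, W s₀ X → W s₁ Y →
      ∀ f : X →ₗ[R] Y, IsStrictMorphism G f → f = 0
  filt : ∀ M : ModuleCat.{0} R, G M → ∃ (m : ℕ) (t : Fin m → S)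
      (c : Fin (m + 1) → Submodule R ↥M), IsSliceFiltration G W m t c

/-- Auxiliary: `G` is closed under arbitrary surjective images. -/
lemma mem_of_surj {G : ModuleCat.{0} R → Prop} (hG : IsTorsionClass G)
    {M N : Type} [AddCommGroup M] [Module R M] [AddCommGroup N] [Module R N]
    (φ : M →ₗ[R] N) (hφ : Function.Surjective φ) (hM : Mem G M) : Mem G N :=
  hG.iso_closed _ _ (φ.quotKerEquivOfSurjective hφ) (hG.quot_closed M _ hM)

/-- Auxiliary: membership transfers along equality of submodules. -/
lemma mem_congr {G : ModuleCat.{0} R → Prop} {M : Type} [AddCommGroup M] [Module R M]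
    {P Q : Submodule R M} (h : P = Q) (hP : Mem G ↥P) : Mem G ↥Q := by subst h; exact hP

theorem statement_4 (k : Type) [Field k] [Algebra k R] [FiniteDimensional k R]
    (G : ModuleCat.{0} R → Prop) (hG : IsTorsionClass G)
    (hfin : ∀ M : ModuleCat.{0} R, G M → Module.Finite R ↥M)
    (A B D : Type) [AddCommGroup A] [Module R A] [AddCommGroup B] [Module R B]
    [AddCommGroup D] [Module R D]
    (hA : Mem G A) (hB : Mem G B) (hD : Mem G D)
    (f : A →ₗ[R] B) (g : B →ₗ[R] D)
    (hf : IsStrictMorphism G f) (hg : IsStrictMorphism G g) :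
    IsStrictMorphism G (g ∘ₗ f) := by
  obtain ⟨⟨hkf, hkf'⟩, ⟨hif, hif'⟩⟩ := hf
  obtain ⟨⟨hkg, hkg'⟩, ⟨hig, hig'⟩⟩ := hg
  -- kernel intersections
  have key_ker : ∀ X : Submodule R A, Mem G ↥X →
      Mem G ↥(LinearMap.ker (g ∘ₗ f) ⊓ X) := by
    intro X hX
    have hmap : Mem G ↥(Submodule.map f X) := by
      refine mem_of_surj hG
        (LinearMap.codRestrict _ (f ∘ₗ X.subtype) ?_) ?_ hX
      · intro x; exact Submodule.mem_map_of_mem x.2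
      · rintro ⟨y, hy⟩
        obtain ⟨x, hx, rfl⟩ := hy
        exact ⟨⟨x, hx⟩, rfl⟩
    have h2 : Mem G ↥(LinearMap.ker g ⊓ Submodule.map f X) := hkg' _ hmap
    have h1 : Mem G ↥(LinearMap.ker f ⊓ X) := hkf' X hX
    set K := LinearMap.ker (g ∘ₗ f) ⊓ X with hK
    have hle : LinearMap.ker f ⊓ X ≤ K := by
      rintro x ⟨hx1, hx2⟩
      refine ⟨?_, hx2⟩
      have hx1' : f x = 0 := hx1
      simp [LinearMap.mem_ker, hx1']
    have hmem : ∀ x : ↥K, f x.1 ∈ LinearMap.ker g ⊓ Submodule.map f X := by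
      rintro ⟨x, hx1, hx2⟩
      exact ⟨by simpa using hx1, Submodule.mem_map_of_mem hx2⟩
    refine hG.ext_closed _ _ _ (Submodule.inclusion hle)
      (LinearMap.codRestrict (LinearMap.ker g ⊓ Submodule.map f X) (f ∘ₗ K.subtype) hmem)
      (Submodule.inclusion_injective hle) ?_ ?_ h1 h2
    · rintro ⟨y, hy1, x, hx, rfl⟩
      have hxK : x ∈ K := by
        refine ⟨?_, hx⟩
        simpa using hy1
      exact ⟨⟨x, hxK⟩, rfl⟩
    · ext x
      constructor
      · rintro ⟨z, rfl⟩
        have : f z.1 = 0 := z.2.1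
        simp only [LinearMap.mem_ker]
        apply Subtype.ext
        exact this
      · intro hx
        have hfx : f x.1 = 0 := by
          have := congrArg Subtype.val hx
          exact this
        exact ⟨⟨x.1, ⟨hfx, x.2.2⟩⟩, rfl⟩
  -- image intersections
  have key_im : ∀ Y : Submodule R D, Mem G ↥Y →
      Mem G ↥(LinearMap.range (g ∘ₗ f) ⊓ Y) := by
    intro Y hY
    have hYg : Mem G ↥(Y ⊓ LinearMap.range g) := by
      exact mem_congr (inf_comm (LinearMap.range g) Y) (hig' Y hY)
    -- P := g⁻¹(Y ⊓ range g) is in G (extension of Y ⊓ range g by ker g)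
    set P := Submodule.comap g (Y ⊓ LinearMap.range g) with hP
    have hkerle : LinearMap.ker g ≤ P := by
      intro x hx
      simp only [hP, Submodule.mem_comap]
      constructor
      · simpa [LinearMap.mem_ker.mp hx] using (Y.zero_mem)
      · exact ⟨x, rfl⟩
    have hPmem : Mem G ↥P := by
      have hmem : ∀ x : ↥P, g x.1 ∈ Y ⊓ LinearMap.range g := fun x => x.2
      refine hG.ext_closed _ _ _ (Submodule.inclusion hkerle)
        (LinearMap.codRestrict (Y ⊓ LinearMap.range g) (g ∘ₗ P.subtype) hmem)
        (Submodule.inclusion_injective hkerle) ?_ ?_ hkg hYg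
      · rintro ⟨y, hy1, b, rfl⟩
        have hbP : b ∈ P := ⟨hy1, ⟨b, rfl⟩⟩
        exact ⟨⟨b, hbP⟩, rfl⟩
      · ext x
        constructor
        · rintro ⟨z, rfl⟩
          have : g z.1 = 0 := z.2
          simp only [LinearMap.mem_ker]
          apply Subtype.ext
          exact this
        · intro hx
          have hgx : g x.1 = 0 := by
            have := congrArg Subtype.val hx
            exact this
          exact ⟨⟨x.1, hgx⟩, rfl⟩
    -- W := range f ⊓ P is in G by strictness of range f
    have hW : Mem G ↥(LinearMap.range f ⊓ P) := hif' P hPmem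
    -- range (g∘f) ⊓ Y is a quotient of W
    refine mem_of_surj hG
      (LinearMap.codRestrict (LinearMap.range (g ∘ₗ f) ⊓ Y)
        (g ∘ₗ (LinearMap.range f ⊓ P).subtype) ?_) ?_ hW
    · rintro ⟨x, ⟨a, rfl⟩, hxP⟩
      exact ⟨⟨a, rfl⟩, hxP.1⟩
    · rintro ⟨y, ⟨a, rfl⟩, hyY⟩
      have hfa : f a ∈ LinearMap.range f ⊓ P :=
        ⟨⟨a, rfl⟩, ⟨by simpa using hyY, ⟨f a, rfl⟩⟩⟩
      exact ⟨⟨f a, hfa⟩, rfl⟩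
  have htopA : Mem G ↥(⊤ : Submodule R A) :=
    hG.iso_closed A _ Submodule.topEquiv.symm hA
  have htopD : Mem G ↥(⊤ : Submodule R D) :=
    hG.iso_closed D _ Submodule.topEquiv.symm hD
  refine ⟨⟨?_, key_ker⟩, ⟨?_, key_im⟩⟩
  · exact mem_congr (inf_top_eq _) (key_ker ⊤ htopA)
  · exact mem_congr (inf_top_eq _) (key_im ⊤ htopD)

end PaperTC
end

section
/- Let 𝒢 be a torsion class in mod-Λ, θ_t a smooth green path, and t₀ ∈ ℝ. An object M ∈ 𝒢 lies in 𝒫(θ_{t₀}) if and only if all subquotients of the strict HN-filtration of M lie in 𝒲(θ_t) for times t < t₀; and M lies in 𝒬(θ_{t₀}) if and only if all such subquotients lie in 𝒲(θ_t) for times t > t₀. -/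
/-!
Common framework: a torsion class `𝒢` in `mod-Λ` is modelled as a predicate
`G : ModuleCat R → Prop` (closed under isomorphism, quotients and extensions).
Strict subobjects, fibrations, cofibrations, strict morphisms, pseudo-torsion
classes etc. follow the definitions of the paper.
-/

namespace PaperTC

variable {R : Type} [Ring R]

/-! ### Auxiliary lemmas for Statement 19 -/

section Statement19Aux

variable {R : Type} [Ring R] (G : ModuleCat.{0} R → Prop) (θ' : StabilityCondition R)

theorem app_congr {X Y : Type} [AddCommGroup X] [Module R X] [AddCommGroup Y] [Module R Y]
    (e : X ≃ₗ[R] Y) : θ'.app X = θ'.app Y :=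
  θ'.iso_inv (ModuleCat.of R X) (ModuleCat.of R Y) e

theorem app_add {X : Type} [AddCommGroup X] [Module R X] [Module.Finite R X]
    (A : Submodule R X) : θ'.app ↥A + θ'.app (X ⧸ A) = θ'.app X :=
  θ'.additive (ModuleCat.of R X) ‹_› A

theorem app_quot_top {X : Type} [AddCommGroup X] [Module R X] [Module.Finite R X] :
    θ'.app (X ⧸ (⊤ : Submodule R X)) = 0 := by
  have h := app_add θ' (⊤ : Submodule R X)
  have h2 : θ'.app ↥(⊤ : Submodule R X) = θ'.app X := app_congr θ' Submodule.topEquiv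
  linarith

theorem app_bot {X : Type} [AddCommGroup X] [Module R X] [Module.Finite R X] :
    θ'.app ↥(⊥ : Submodule R X) = 0 := by
  have h := app_add θ' (⊥ : Submodule R X)
  have h2 : θ'.app (X ⧸ (⊥ : Submodule R X)) = θ'.app X :=
    app_congr θ' (Submodule.quotEquivOfEqBot _ rfl)
  linarith

theorem app_subsingleton {X : Type} [AddCommGroup X] [Module R X] (h : Subsingleton X) :
    θ'.app X = 0 := by
  have : Module.Finite R X := Module.Finite.of_surjective (0 : R →ₗ[R] X)
    (fun x => ⟨0, Subsingleton.elim _ _⟩)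
  have e : X ≃ₗ[R] ↥(⊥ : Submodule R X) :=
    { toFun := fun _ => 0, map_add' := fun _ _ => (Subsingleton.elim _ _),
      map_smul' := fun _ _ => (Subsingleton.elim _ _),
      invFun := fun _ => 0, left_inv := fun _ => Subsingleton.elim _ _,
      right_inv := fun _ => Subsingleton.elim _ _ }
  rw [app_congr θ' e, app_bot]

variable {R : Type} [Ring R] {G : ModuleCat.{0} R → Prop}

theorem map_comap_inf {M N : Type} [AddCommGroup M] [Module R M] [AddCommGroup N] [Module R N]
    (f : M →ₗ[R] N) (D : Submodule R N) (B : Submodule R M) :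
    Submodule.map f (Submodule.comap f D ⊓ B) = D ⊓ Submodule.map f B := by
  ext x
  constructor
  · rintro ⟨b, ⟨hbD, hbB⟩, rfl⟩
    exact ⟨hbD, ⟨b, hbB, rfl⟩⟩
  · rintro ⟨hxD, ⟨b, hbB, rfl⟩⟩
    exact ⟨b, ⟨hxD, hbB⟩, rfl⟩

theorem memG_ext (hG : IsTorsionClass G) {Y : Type} [AddCommGroup Y] [Module R Y]
    (q : Submodule R Y) (h1 : Mem G ↥q) (h2 : Mem G (Y ⧸ q)) : Mem G Y :=
  hG.ext_closed ↥q Y (Y ⧸ q) q.subtype q.mkQ q.injective_subtype (Submodule.mkQ_surjective q)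
    (by rw [Submodule.range_subtype, Submodule.ker_mkQ]) h1 h2

/-- `↥p ⧸ (A ∩ p)  ≃  image of p in X ⧸ A`. -/
noncomputable def quotCompEquiv {X : Type} [AddCommGroup X] [Module R X]
    (A p : Submodule R X) :
    (↥p ⧸ Submodule.comap p.subtype A) ≃ₗ[R] ↥(Submodule.map A.mkQ p) :=
  ((Submodule.quotEquivOfEq _ _ (by
      conv_lhs => rw [← Submodule.ker_mkQ A]
      rw [← LinearMap.ker_comp])).trans
    (LinearMap.quotKerEquivRange (A.mkQ.comp p.subtype))).trans
    (LinearEquiv.ofEq _ _ (by rw [LinearMap.range_comp, Submodule.range_subtype]))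

theorem memG_map_mkQ (hG : IsTorsionClass G) {X : Type} [AddCommGroup X] [Module R X]
    {p : Submodule R X} (A : Submodule R X) (hp : Mem G ↥p) :
    Mem G ↥(Submodule.map A.mkQ p) :=
  hG.iso_closed _ _ (quotCompEquiv A p) (hG.quot_closed ↥p _ hp)

noncomputable def comapSubtypeEquiv {X : Type} [AddCommGroup X] [Module R X]
    (p B : Submodule R X) :
    ↥(Submodule.comap p.subtype B) ≃ₗ[R] ↥(p ⊓ B) :=
  (Submodule.equivMapOfInjective p.subtype p.injective_subtype
      (Submodule.comap p.subtype B)).trans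
    (LinearEquiv.ofEq _ _ (Submodule.map_comap_subtype p B))

theorem memG_comap_subtype (hG : IsTorsionClass G) {X : Type} [AddCommGroup X] [Module R X]
    (p : Submodule R X) {B : Submodule R X} (h : Mem G ↥(p ⊓ B)) :
    Mem G ↥(Submodule.comap p.subtype B) :=
  hG.iso_closed _ _ (comapSubtypeEquiv p B).symm h

theorem memG_of_equiv (hG : IsTorsionClass G) {X Y : Type} [AddCommGroup X] [Module R X]
    [AddCommGroup Y] [Module R Y]
    (e : X ≃ₗ[R] Y) (h : Mem G X) : Mem G Y := hG.iso_closed _ _ e h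

theorem strict_bot (hG : IsTorsionClass G) {X : Type} [AddCommGroup X] [Module R X] :
    IsStrictSub G (⊥ : Submodule R X) := by
  refine ⟨hG.zero_mem _ inferInstance, fun B' _ => ?_⟩
  rw [bot_inf_eq]
  exact hG.zero_mem _ inferInstance

theorem strict_top (hG : IsTorsionClass G) {X : Type} [AddCommGroup X] [Module R X]
    (h : Mem G X) : IsStrictSub G (⊤ : Submodule R X) := by
  refine ⟨hG.iso_closed _ _ Submodule.topEquiv.symm h, fun B' hB' => ?_⟩
  rw [top_inf_eq]
  exact hB'

variable {R : Type} [Ring R] {G : ModuleCat.{0} R → Prop}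

theorem le_comap_mkQ {X : Type} [AddCommGroup X] [Module R X]
    (A : Submodule R X) (D : Submodule R (X ⧸ A)) : A ≤ Submodule.comap A.mkQ D := by
  intro x hx
  have : A.mkQ x = 0 := by
    rw [Submodule.mkQ_apply]
    exact (Submodule.Quotient.mk_eq_zero A).2 hx
  simp only [Submodule.mem_comap, this]
  exact D.zero_mem

theorem memG_comap_mkQ (hG : IsTorsionClass G) {X : Type} [AddCommGroup X] [Module R X]
    {A : Submodule R X} (hA1 : Mem G ↥A) {D : Submodule R (X ⧸ A)} (hD1 : Mem G ↥D) :
    Mem G ↥(Submodule.comap A.mkQ D) := by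
  set C := Submodule.comap A.mkQ D with hC
  have hAC : A ≤ C := le_comap_mkQ A D
  refine memG_ext hG (Submodule.comap C.subtype A) ?_ ?_
  · refine memG_comap_subtype hG C ?_
    rw [inf_eq_right.mpr hAC]
    exact hA1
  · refine memG_of_equiv hG ((quotCompEquiv A C).trans (LinearEquiv.ofEq _ _ ?_)).symm hD1
    exact Submodule.map_comap_eq_of_surjective (Submodule.mkQ_surjective A) D

/-- T1: preimage in `X` of a strict subobject of `X ⧸ A` is strict. -/
theorem strict_comap_mkQ (hG : IsTorsionClass G) {X : Type} [AddCommGroup X] [Module R X]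
    {A : Submodule R X} (hA : IsStrictSub G A) {D : Submodule R (X ⧸ A)}
    (hD : IsStrictSub G D) : IsStrictSub G (Submodule.comap A.mkQ D) := by
  set C := Submodule.comap A.mkQ D with hC
  have hAC : A ≤ C := le_comap_mkQ A D
  constructor
  · exact memG_comap_mkQ hG hA.1 hD.1
  · intro B' hB'
    refine memG_ext hG (Submodule.comap (C ⊓ B').subtype A) ?_ ?_
    · refine memG_comap_subtype hG (C ⊓ B') ?_
      have e1 : (C ⊓ B') ⊓ A = A ⊓ B' := by
        rw [inf_right_comm, inf_eq_right.mpr hAC]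
      rw [e1]
      exact hA.2 B' hB'
    · have e2 : Submodule.map A.mkQ (C ⊓ B') = D ⊓ Submodule.map A.mkQ B' :=
        map_comap_inf A.mkQ D B'
      exact memG_of_equiv hG ((quotCompEquiv A (C ⊓ B')).trans
        (LinearEquiv.ofEq _ _ e2)).symm (hD.2 _ (memG_map_mkQ hG A hB'))

/-- T3: image in `X ⧸ A` of a strict subobject of `X` is strict. -/
theorem strict_map_mkQ (hG : IsTorsionClass G) {X : Type} [AddCommGroup X] [Module R X]
    {A : Submodule R X} (hA : IsStrictSub G A) {B : Submodule R X}
    (hB : IsStrictSub G B) : IsStrictSub G (Submodule.map A.mkQ B) := by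
  constructor
  · exact memG_map_mkQ hG A hB.1
  · intro D' hD'
    have hC' : Mem G ↥(Submodule.comap A.mkQ D') := memG_comap_mkQ hG hA.1 hD'
    have e1 : Submodule.map A.mkQ B ⊓ D' =
        Submodule.map A.mkQ (B ⊓ Submodule.comap A.mkQ D') := by
      rw [inf_comm B, map_comap_inf, inf_comm]
    rw [e1]
    exact memG_map_mkQ hG A (hB.2 _ hC')

/-- T2: image in `X` of a strict subobject of a strict subobject is strict. -/
theorem strict_map_subtype (hG : IsTorsionClass G) {X : Type} [AddCommGroup X] [Module R X]
    {p : Submodule R X} (hp : IsStrictSub G p) {B : Submodule R ↥p}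
    (hB : IsStrictSub G B) : IsStrictSub G (Submodule.map p.subtype B) := by
  constructor
  · exact memG_of_equiv hG (Submodule.equivMapOfInjective p.subtype p.injective_subtype B) hB.1
  · intro B' hB'
    have e1 : Submodule.map p.subtype B ⊓ B' =
        Submodule.map p.subtype (B ⊓ Submodule.comap p.subtype B') := by
      rw [inf_comm B, map_comap_inf, inf_comm]
    rw [e1]
    refine memG_of_equiv hG (Submodule.equivMapOfInjective p.subtype p.injective_subtype _) ?_
    exact hB.2 _ (memG_comap_subtype hG p (hp.2 B' hB'))

/-- T4: preimage in a strict subobject of a strict subobject is strict. -/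
theorem strict_comap_subtype (hG : IsTorsionClass G) {X : Type} [AddCommGroup X] [Module R X]
    {p : Submodule R X} (hp : IsStrictSub G p) {q : Submodule R X}
    (hq : IsStrictSub G q) : IsStrictSub G (Submodule.comap p.subtype q) := by
  constructor
  · refine memG_comap_subtype hG p ?_
    rw [inf_comm]
    exact hq.2 p hp.1
  · intro P hP
    have e1 : Submodule.map p.subtype (Submodule.comap p.subtype q ⊓ P) =
        q ⊓ Submodule.map p.subtype P := map_comap_inf p.subtype q P
    refine memG_of_equiv hG ((Submodule.equivMapOfInjective p.subtype p.injective_subtype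
      _).trans (LinearEquiv.ofEq _ _ e1)).symm ?_
    refine hq.2 _ ?_
    exact memG_of_equiv hG (Submodule.equivMapOfInjective p.subtype p.injective_subtype P) hP

/-- strictness transports along linear equivalences. -/
theorem strict_map_equiv (hG : IsTorsionClass G) {X Y : Type} [AddCommGroup X] [Module R X]
    [AddCommGroup Y] [Module R Y] (e : X ≃ₗ[R] Y) {B : Submodule R X}
    (hB : IsStrictSub G B) : IsStrictSub G (Submodule.map (e : X →ₗ[R] Y) B) := by
  constructor
  · exact memG_of_equiv hG (e.submoduleMap B) hB.1
  · intro B' hB'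
    have e1 : Submodule.map (e : X →ₗ[R] Y) B ⊓ B' =
        Submodule.map (e : X →ₗ[R] Y) (B ⊓ Submodule.comap (e : X →ₗ[R] Y) B') := by
      rw [inf_comm B, map_comap_inf, inf_comm]
    rw [e1]
    refine memG_of_equiv hG (Submodule.equivMapOfInjective (e : X →ₗ[R] Y) e.injective _) ?_
    refine hB.2 _ ?_
    have e2 : Submodule.comap (e : X →ₗ[R] Y) B' =
        Submodule.map (e.symm : Y →ₗ[R] X) B' := by
      ext x
      simp only [Submodule.mem_comap, Submodule.mem_map, LinearEquiv.coe_coe]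
      constructor
      · intro h
        exact ⟨e x, h, e.symm_apply_apply x⟩
      · rintro ⟨y, hy, rfl⟩
        simpa using hy
    rw [e2]
    exact memG_of_equiv hG (Submodule.equivMapOfInjective _ e.symm.injective B') hB'

variable {R : Type} [Ring R] {G : ModuleCat.{0} R → Prop}

/-- `θ` is nonnegative on all strict quotients of `X` (including `X` itself). -/
def PosQ (G : ModuleCat.{0} R → Prop) (θ' : StabilityCondition R) (X : Type) [AddCommGroup X]
    [Module R X] : Prop :=
  ∀ B : Submodule R X, IsStrictSub G B → 0 ≤ θ'.app (X ⧸ B)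

/-- `θ` is nonpositive on all strict subobjects of `X` (including `X` itself). -/
def NegS (G : ModuleCat.{0} R → Prop) (θ' : StabilityCondition R) (X : Type) [AddCommGroup X]
    [Module R X] : Prop :=
  ∀ B : Submodule R X, IsStrictSub G B → θ'.app ↥B ≤ 0

theorem map_map_symm {X Y : Type} [AddCommGroup X] [Module R X] [AddCommGroup Y] [Module R Y]
    (e : X ≃ₗ[R] Y) (B : Submodule R Y) :
    Submodule.map (e : X →ₗ[R] Y) (Submodule.map (e.symm : Y →ₗ[R] X) B) = B := by
  ext y
  simp only [Submodule.mem_map, LinearEquiv.coe_coe]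
  constructor
  · rintro ⟨x, ⟨b, hb, rfl⟩, rfl⟩
    simpa using hb
  · intro hy
    exact ⟨e.symm y, ⟨y, hy, rfl⟩, e.apply_symm_apply y⟩

theorem PosQ_congr (hG : IsTorsionClass G) {θ' : StabilityCondition R} {X Y : Type}
    [AddCommGroup X] [Module R X] [AddCommGroup Y] [Module R Y] (e : X ≃ₗ[R] Y)
    (h : PosQ G θ' X) : PosQ G θ' Y := by
  intro B hB
  have hs : IsStrictSub G (Submodule.map (e.symm : Y →ₗ[R] X) B) := strict_map_equiv hG e.symm hB
  have eq : θ'.app (Y ⧸ B) = θ'.app (X ⧸ Submodule.map (e.symm : Y →ₗ[R] X) B) :=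
    (app_congr θ' (Submodule.Quotient.equiv _ B e (map_map_symm e B))).symm
  rw [eq]
  exact h _ hs

theorem NegS_congr (hG : IsTorsionClass G) {θ' : StabilityCondition R} {X Y : Type}
    [AddCommGroup X] [Module R X] [AddCommGroup Y] [Module R Y] (e : X ≃ₗ[R] Y)
    (h : NegS G θ' X) : NegS G θ' Y := by
  intro B hB
  have hs : IsStrictSub G (Submodule.map (e.symm : Y →ₗ[R] X) B) := strict_map_equiv hG e.symm hB
  have eq : θ'.app ↥B = θ'.app ↥(Submodule.map (e.symm : Y →ₗ[R] X) B) :=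
    app_congr θ' (e.symm.submoduleMap B)
  rw [eq]
  exact h _ hs

theorem PosQ_quot (hG : IsTorsionClass G) {θ' : StabilityCondition R} {X : Type}
    [AddCommGroup X] [Module R X] {A : Submodule R X} (hA : IsStrictSub G A)
    (h : PosQ G θ' X) : PosQ G θ' (X ⧸ A) := by
  intro D hD
  have hC : IsStrictSub G (Submodule.comap A.mkQ D) := strict_comap_mkQ hG hA hD
  have hAC : A ≤ Submodule.comap A.mkQ D := le_comap_mkQ A D
  have eq : θ'.app ((X ⧸ A) ⧸ D) = θ'.app (X ⧸ Submodule.comap A.mkQ D) := by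
    refine app_congr θ' ?_
    refine (Submodule.quotEquivOfEq D _ ?_).trans
      (Submodule.quotientQuotientEquivQuotient A (Submodule.comap A.mkQ D) hAC)
    exact (Submodule.map_comap_eq_of_surjective (Submodule.mkQ_surjective A) D).symm
  rw [eq]
  exact h _ hC

theorem NegS_sub (hG : IsTorsionClass G) {θ' : StabilityCondition R} {X : Type}
    [AddCommGroup X] [Module R X] {p : Submodule R X} (hp : IsStrictSub G p)
    (h : NegS G θ' X) : NegS G θ' ↥p := by
  intro B hB
  have eq : θ'.app ↥B = θ'.app ↥(Submodule.map p.subtype B) :=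
    app_congr θ' (Submodule.equivMapOfInjective p.subtype p.injective_subtype B)
  rw [eq]
  exact h _ (strict_map_subtype hG hp hB)

theorem map_mkQ_self {X : Type} [AddCommGroup X] [Module R X] (B : Submodule R X) :
    Submodule.map B.mkQ B = ⊥ := by
  ext x
  simp only [Submodule.mem_map, Submodule.mem_bot]
  constructor
  · rintro ⟨b, hb, rfl⟩
    rw [Submodule.mkQ_apply]
    exact (Submodule.Quotient.mk_eq_zero B).2 hb
  · rintro rfl
    exact ⟨0, B.zero_mem, map_zero _⟩

theorem PosQ_ext (hG : IsTorsionClass G) {θ' : StabilityCondition R} {X : Type}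
    [AddCommGroup X] [Module R X] [Module.Finite R X] {A : Submodule R X}
    (hAs : IsStrictSub G A) (hA : PosQ G θ' ↥A) (hQ : PosQ G θ' (X ⧸ A)) : PosQ G θ' X := by
  intro B hB
  have hadd : θ'.app ↥(Submodule.map B.mkQ A) + θ'.app ((X ⧸ B) ⧸ Submodule.map B.mkQ A)
      = θ'.app (X ⧸ B) := app_add θ' (Submodule.map B.mkQ A)
  have h1 : 0 ≤ θ'.app ↥(Submodule.map B.mkQ A) := by
    rw [← app_congr θ' (quotCompEquiv B A)]
    exact hA _ (strict_comap_subtype hG hAs hB)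
  have h2 : 0 ≤ θ'.app ((X ⧸ B) ⧸ Submodule.map B.mkQ A) := by
    have e1 : ((X ⧸ B) ⧸ Submodule.map B.mkQ A) ≃ₗ[R] X ⧸ (A ⊔ B) := by
      refine (Submodule.quotEquivOfEq _ _ ?_).trans
        (Submodule.quotientQuotientEquivQuotient B (A ⊔ B) le_sup_right)
      rw [Submodule.map_sup, map_mkQ_self, sup_bot_eq]
    have e2 : ((X ⧸ A) ⧸ Submodule.map A.mkQ B) ≃ₗ[R] X ⧸ (A ⊔ B) := by
      refine (Submodule.quotEquivOfEq _ _ ?_).trans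
        (Submodule.quotientQuotientEquivQuotient A (A ⊔ B) le_sup_left)
      rw [Submodule.map_sup, map_mkQ_self, bot_sup_eq]
    rw [app_congr θ' (e1.trans e2.symm)]
    exact hQ _ (strict_map_mkQ hG hAs hB)
  linarith

theorem NegS_ext (hG : IsTorsionClass G) {θ' : StabilityCondition R} {X : Type}
    [AddCommGroup X] [Module R X] [Module.Finite R X] [IsNoetherian R X] {A : Submodule R X}
    (hAs : IsStrictSub G A) (hA : NegS G θ' ↥A) (hQ : NegS G θ' (X ⧸ A)) : NegS G θ' X := by
  intro B hB
  have hadd : θ'.app ↥(Submodule.comap B.subtype A) +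
      θ'.app (↥B ⧸ Submodule.comap B.subtype A) = θ'.app ↥B :=
    app_add θ' (Submodule.comap B.subtype A)
  have h1 : θ'.app ↥(Submodule.comap B.subtype A) ≤ 0 := by
    have e1 : ↥(Submodule.comap B.subtype A) ≃ₗ[R] ↥(Submodule.comap A.subtype B) :=
      (comapSubtypeEquiv B A).trans ((LinearEquiv.ofEq _ _ (inf_comm B A)).trans
        (comapSubtypeEquiv A B).symm)
    rw [app_congr θ' e1]
    exact hA _ (strict_comap_subtype hG hAs hB)
  have h2 : θ'.app (↥B ⧸ Submodule.comap B.subtype A) ≤ 0 := by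
    rw [app_congr θ' (quotCompEquiv A B)]
    exact hQ _ (strict_map_mkQ hG hAs hB)
  linarith


theorem exists_last_zero {f : ℝ → ℝ} (hf : Continuous f) {a b : ℝ} (hab : a ≤ b)
    (ha : 0 ≤ f a) (hb : f b < 0) :
    ∃ w ∈ Set.Ico a b, f w = 0 ∧ ∀ v, w < v → v ≤ b → f v < 0 := by
  set S : Set ℝ := Set.Icc a b ∩ f ⁻¹' Set.Ici 0 with hS
  have hSc : IsClosed S := IsClosed.inter isClosed_Icc (isClosed_Ici.preimage hf)
  have hSne : S.Nonempty := ⟨a, ⟨le_refl a, hab⟩, ha⟩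
  have hSbdd : BddAbove S := ⟨b, fun x hx => hx.1.2⟩
  set w := sSup S with hw
  have hwS : w ∈ S := hSc.csSup_mem hSne hSbdd
  have hwb : w ≠ b := fun h => absurd hwS.2 (by rw [h]; simpa using not_le.2 hb)
  have hwlt : w < b := lt_of_le_of_ne hwS.1.2 hwb
  have hneg : ∀ v, w < v → v ≤ b → f v < 0 := by
    intro v hv hvb
    by_contra hcon
    push_neg at hcon
    have : v ∈ S := ⟨⟨le_trans hwS.1.1 hv.le, hvb⟩, hcon⟩
    exact absurd (le_csSup hSbdd this) (not_le.2 hv)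
  have hw0 : f w = 0 := by
    refine le_antisymm ?_ hwS.2
    by_contra hcon
    push_neg at hcon
    have hev : ∀ᶠ v in nhdsWithin w (Set.Ioi w), 0 < f v :=
      ((hf.tendsto w).mono_left nhdsWithin_le_nhds).eventually (eventually_gt_nhds hcon)
    have hev2 : Set.Ioc w b ∈ nhdsWithin w (Set.Ioi w) :=
      Ioc_mem_nhdsGT_of_mem ⟨le_refl w, hwlt⟩
    obtain ⟨v, hv1, hv2⟩ := (hev.and (Filter.eventually_of_mem hev2 (fun x hx => hx))).exists
    exact absurd hv1 (not_lt.2 (hneg v hv2.1 hv2.2).le)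
  exact ⟨w, ⟨hwS.1.1, hwlt⟩, hw0, hneg⟩

theorem deriv_nonpos_of_right_neg {f : ℝ → ℝ} {w b : ℝ} (hd : DifferentiableAt ℝ f w)
    (hw0 : f w = 0) (hwb : w < b) (hneg : ∀ v, w < v → v ≤ b → f v < 0) :
    deriv f w ≤ 0 := by
  by_contra hcon
  push_neg at hcon
  have hder := hd.hasDerivAt
  rw [hasDerivAt_iff_tendsto_slope] at hder
  have hev : ∀ᶠ v in nhdsWithin w {w}ᶜ, 0 < slope f w v :=
    hder.eventually (eventually_gt_nhds hcon)
  have hmono : nhdsWithin w (Set.Ioi w) ≤ nhdsWithin w {w}ᶜ :=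
    nhdsWithin_mono w (fun v hv => Set.mem_compl_singleton_iff.2 (ne_of_gt hv))
  have hev' : ∀ᶠ v in nhdsWithin w (Set.Ioi w), 0 < slope f w v := hev.filter_mono hmono
  have hev2 : Set.Ioc w b ∈ nhdsWithin w (Set.Ioi w) :=
    Ioc_mem_nhdsGT_of_mem ⟨le_refl w, hwb⟩
  obtain ⟨v, hv1, hv2⟩ := (hev'.and (Filter.eventually_of_mem hev2 (fun x hx => hx))).exists
  have : slope f w v < 0 := by
    rw [slope_def_field]
    have hnum : f v - f w < 0 := by rw [hw0]; simpa using hneg v hv2.1 hv2.2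
    exact div_neg_of_neg_of_pos hnum (by linarith [hv2.1])
  linarith

theorem exists_first_zero {f : ℝ → ℝ} (hf : Continuous f) {a b : ℝ} (hab : a ≤ b)
    (ha : 0 < f a) (hb : f b ≤ 0) :
    ∃ w ∈ Set.Ioc a b, f w = 0 ∧ ∀ v, a ≤ v → v < w → 0 < f v := by
  set S : Set ℝ := Set.Icc a b ∩ f ⁻¹' Set.Iic 0 with hS
  have hSc : IsClosed S := IsClosed.inter isClosed_Icc (isClosed_Iic.preimage hf)
  have hSne : S.Nonempty := ⟨b, ⟨hab, le_refl b⟩, hb⟩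
  have hSbdd : BddBelow S := ⟨a, fun x hx => hx.1.1⟩
  set w := sInf S with hw
  have hwS : w ∈ S := hSc.csInf_mem hSne hSbdd
  have hwa : w ≠ a := fun h => absurd hwS.2 (by rw [h]; simpa using not_le.2 ha)
  have hwgt : a < w := lt_of_le_of_ne hwS.1.1 (Ne.symm hwa)
  have hpos : ∀ v, a ≤ v → v < w → 0 < f v := by
    intro v hva hv
    by_contra hcon
    push_neg at hcon
    have : v ∈ S := ⟨⟨hva, le_trans hv.le hwS.1.2⟩, hcon⟩
    exact absurd (csInf_le hSbdd this) (not_le.2 hv)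
  have hw0 : f w = 0 := by
    refine le_antisymm hwS.2 ?_
    by_contra hcon
    push_neg at hcon
    have hev : ∀ᶠ v in nhdsWithin w (Set.Iio w), f v < 0 :=
      ((hf.tendsto w).mono_left nhdsWithin_le_nhds).eventually (eventually_lt_nhds hcon)
    have hev2 : Set.Ico a w ∈ nhdsWithin w (Set.Iio w) :=
      Ico_mem_nhdsLT_of_mem ⟨hwgt, le_refl w⟩
    obtain ⟨v, hv1, hv2⟩ := (hev.and (Filter.eventually_of_mem hev2 (fun x hx => hx))).exists
    exact absurd hv1 (not_lt.2 (hpos v hv2.1 hv2.2).le)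
  exact ⟨w, ⟨hwgt, hwS.1.2⟩, hw0, hpos⟩

theorem deriv_nonpos_of_left_pos {f : ℝ → ℝ} {a w : ℝ} (hd : DifferentiableAt ℝ f w)
    (hw0 : f w = 0) (haw : a < w) (hpos : ∀ v, a ≤ v → v < w → 0 < f v) :
    deriv f w ≤ 0 := by
  by_contra hcon
  push_neg at hcon
  have hder := hd.hasDerivAt
  rw [hasDerivAt_iff_tendsto_slope] at hder
  have hev : ∀ᶠ v in nhdsWithin w {w}ᶜ, 0 < slope f w v :=
    hder.eventually (eventually_gt_nhds hcon)
  have hmono : nhdsWithin w (Set.Iio w) ≤ nhdsWithin w {w}ᶜ :=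
    nhdsWithin_mono w (fun v hv => Set.mem_compl_singleton_iff.2 (ne_of_lt hv))
  have hev' : ∀ᶠ v in nhdsWithin w (Set.Iio w), 0 < slope f w v := hev.filter_mono hmono
  have hev2 : Set.Ico a w ∈ nhdsWithin w (Set.Iio w) :=
    Ico_mem_nhdsLT_of_mem ⟨haw, le_refl w⟩
  obtain ⟨v, hv1, hv2⟩ := (hev'.and (Filter.eventually_of_mem hev2 (fun x hx => hx))).exists
  have : slope f w v < 0 := by
    rw [slope_def_field]
    have hnum : 0 < f v - f w := by rw [hw0]; simpa using hpos v hv2.1 hv2.2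
    exact div_neg_of_pos_of_neg hnum (by linarith [hv2.2])
  linarith

variable {R : Type} [Ring R] {G : ModuleCat.{0} R → Prop} {θ : ℝ → StabilityCondition R}

/-- Claim E: nonnegativity on strict quotients propagates forward along a green path. -/
theorem posQ_forward (hG : IsTorsionClass G) (hθ : IsGreenPath G θ) {X : Type}
    [AddCommGroup X] [Module R X] [Module.Finite R X] [IsNoetherian R X]
    (hX : Mem G X) {u₁ : ℝ} (h : PosQ G (θ u₁) X) :
    ∀ A : Submodule R X, IsStrictSub G A → ∀ u, u₁ ≤ u → 0 ≤ (θ u).app (X ⧸ A) := by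
  intro A
  refine (wellFounded_gt (α := Submodule R X)).induction
    (C := fun A => IsStrictSub G A → ∀ u, u₁ ≤ u → 0 ≤ (θ u).app (X ⧸ A)) A ?_
  clear A
  intro A IH hA u hu
  by_contra hneg
  push_neg at hneg
  have hu1 : 0 ≤ (θ u₁).app (X ⧸ A) := h A hA
  have hlt : u₁ < u := by
    rcases lt_or_eq_of_le hu with h' | h'
    · exact h'
    · rw [← h'] at hneg; linarith
  set f : ℝ → ℝ := fun s => (θ s).val (ModuleCat.of R (X ⧸ A)) with hf
  have hfc : Continuous f := (hθ.smooth (ModuleCat.of R (X ⧸ A))).continuous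
  have hfd : Differentiable ℝ f := (hθ.smooth (ModuleCat.of R (X ⧸ A))).differentiable (by simp)
  obtain ⟨w, hwmem, hw0, hwneg⟩ := exists_last_zero hfc hlt.le hu1 hneg
  have hderiv : deriv f w ≤ 0 :=
    deriv_nonpos_of_right_neg (hfd w) hw0 hwmem.2 hwneg
  have hnsub : ¬Subsingleton (X ⧸ A) := fun hsub => by
    have := app_subsingleton (θ u) hsub
    rw [this] at hneg; linarith
  have hMemQ : Mem G (X ⧸ A) := hG.quot_closed X A hX
  have hnss : ¬memW G (θ w) (X ⧸ A) := by
    intro hss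
    exact absurd (hθ.green w (ModuleCat.of R (X ⧸ A)) hnsub hss) (not_lt.2 hderiv)
  obtain ⟨D, hDs, hDpos⟩ : ∃ D : Submodule R (X ⧸ A), IsStrictSub G D ∧ 0 < (θ w).app ↥D := by
    by_contra hcon
    push_neg at hcon
    exact hnss ⟨hMemQ, hw0, fun B hB => hcon B hB⟩
  have hCs : IsStrictSub G (Submodule.comap A.mkQ D) := strict_comap_mkQ hG hA hDs
  have hAC : A ≤ Submodule.comap A.mkQ D := le_comap_mkQ A D
  have hne : A ≠ Submodule.comap A.mkQ D := by
    intro hEq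
    have hD : D = ⊥ := by
      rw [← Submodule.map_comap_eq_of_surjective (Submodule.mkQ_surjective A) D, ← hEq,
        map_mkQ_self]
    rw [hD, app_bot] at hDpos
    linarith
  have hIH := IH _ (lt_of_le_of_ne hAC hne) hCs w (le_trans (le_refl u₁) hwmem.1)
  have hadd : (θ w).app ↥D + (θ w).app ((X ⧸ A) ⧸ D) = (θ w).app (X ⧸ A) := app_add (θ w) D
  have hquot : (θ w).app ((X ⧸ A) ⧸ D) = (θ w).app (X ⧸ Submodule.comap A.mkQ D) := by
    refine app_congr (θ w) ?_
    refine (Submodule.quotEquivOfEq D _ ?_).trans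
      (Submodule.quotientQuotientEquivQuotient A (Submodule.comap A.mkQ D) hAC)
    exact (Submodule.map_comap_eq_of_surjective (Submodule.mkQ_surjective A) D).symm
  have hfw : (θ w).app (X ⧸ A) = 0 := hw0
  rw [hfw, hquot] at hadd
  linarith

/-- Claim E': nonpositivity on strict subobjects propagates backward along a green path. -/
theorem negS_backward (hG : IsTorsionClass G) (hθ : IsGreenPath G θ) {X : Type}
    [AddCommGroup X] [Module R X] [Module.Finite R X] [IsNoetherian R X] [IsArtinian R X]
    {u₂ : ℝ} (h : NegS G (θ u₂) X) :
    ∀ A : Submodule R X, IsStrictSub G A → ∀ u, u ≤ u₂ → (θ u).app ↥A ≤ 0 := by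
  intro A
  refine (wellFounded_lt (α := Submodule R X)).induction
    (C := fun A => IsStrictSub G A → ∀ u, u ≤ u₂ → (θ u).app ↥A ≤ 0) A ?_
  clear A
  intro A IH hA u hu
  by_contra hpos
  push_neg at hpos
  have hu2 : (θ u₂).app ↥A ≤ 0 := h A hA
  have hlt : u < u₂ := by
    rcases lt_or_eq_of_le hu with h' | h'
    · exact h'
    · rw [h'] at hpos; linarith
  set f : ℝ → ℝ := fun s => (θ s).val (ModuleCat.of R ↥A) with hf
  have hfc : Continuous f := (hθ.smooth (ModuleCat.of R ↥A)).continuous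
  have hfd : Differentiable ℝ f := (hθ.smooth (ModuleCat.of R ↥A)).differentiable (by simp)
  obtain ⟨w, hwmem, hw0, hwpos⟩ := exists_first_zero hfc hlt.le hpos hu2
  have hderiv : deriv f w ≤ 0 :=
    deriv_nonpos_of_left_pos (hfd w) hw0 hwmem.1 hwpos
  have hnsub : ¬Subsingleton ↥A := fun hsub => by
    have := app_subsingleton (θ u) hsub
    rw [this] at hpos; linarith
  have hnss : ¬memW G (θ w) ↥A := by
    intro hss
    exact absurd (hθ.green w (ModuleCat.of R ↥A) hnsub hss) (not_lt.2 hderiv)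
  obtain ⟨B, hBs, hBpos⟩ : ∃ B : Submodule R ↥A, IsStrictSub G B ∧ 0 < (θ w).app ↥B := by
    by_contra hcon
    push_neg at hcon
    exact hnss ⟨hA.1, hw0, fun B hB => hcon B hB⟩
  have hBt : IsStrictSub G (Submodule.map A.subtype B) := strict_map_subtype hG hA hBs
  have hle : Submodule.map A.subtype B ≤ A := Submodule.map_subtype_le A B
  have hne : Submodule.map A.subtype B ≠ A := by
    intro hEq
    have hBtop : B = ⊤ := by
      have := congrArg (Submodule.comap A.subtype) hEq
      rwa [Submodule.comap_map_eq_of_injective A.injective_subtype,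
        Submodule.comap_subtype_self] at this
    rw [hBtop, app_congr (θ w) (Submodule.topEquiv (M := ↥A))] at hBpos
    have : (θ w).app ↥A = 0 := hw0
    linarith
  have hIH := IH _ (lt_of_le_of_ne hle hne) hBt w hwmem.2
  have : (θ w).app ↥(Submodule.map A.subtype B) = (θ w).app ↥B :=
    (app_congr (θ w) (Submodule.equivMapOfInjective A.subtype A.injective_subtype B)).symm
  rw [this] at hIH
  linarith

/-- Claim G: strict positivity strictly ahead of a `PosQ` time. -/
theorem pos_of_posQ (hG : IsTorsionClass G) (hθ : IsGreenPath G θ) {X : Type}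
    [AddCommGroup X] [Module R X] [Module.Finite R X] [IsNoetherian R X]
    (hX : Mem G X) {u₁ : ℝ} (h : PosQ G (θ u₁) X) (hns : ¬Subsingleton X) :
    ∀ u, u₁ < u → 0 < (θ u).app X := by
  intro u hu
  have hge : ∀ v, u₁ ≤ v → 0 ≤ (θ v).app X := by
    intro v hv
    have := posQ_forward hG hθ hX h ⊥ (strict_bot hG) v hv
    rwa [app_congr (θ v) (Submodule.quotEquivOfEqBot (⊥ : Submodule R X) rfl)] at this
  by_contra hcon
  push_neg at hcon
  have hu0 : (θ u).app X = 0 := le_antisymm hcon (hge u hu.le)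
  set f : ℝ → ℝ := fun s => (θ s).val (ModuleCat.of R X) with hf
  have hmin : IsLocalMin f u := by
    filter_upwards [isOpen_Ioi.mem_nhds hu] with v hv
    have : f u = 0 := hu0
    rw [this]
    exact hge v (le_of_lt hv)
  have hderiv : deriv f u = 0 := hmin.deriv_eq_zero
  have hss : memW G (θ u) X := by
    refine ⟨hX, hu0, fun B hB => ?_⟩
    have hadd := app_add (θ u) B
    have hq := posQ_forward hG hθ hX h B hB u hu.le
    rw [hu0] at hadd
    linarith
  exact absurd (hθ.green u (ModuleCat.of R X) hns hss) (by rw [hderiv]; exact lt_irrefl 0)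

/-- Claim G': strict negativity strictly before a `NegS` time. -/
theorem neg_of_negS (hG : IsTorsionClass G) (hθ : IsGreenPath G θ) {X : Type}
    [AddCommGroup X] [Module R X] [Module.Finite R X] [IsNoetherian R X] [IsArtinian R X]
    (hX : Mem G X) {u₂ : ℝ} (h : NegS G (θ u₂) X) (hns : ¬Subsingleton X) :
    ∀ u, u < u₂ → (θ u).app X < 0 := by
  intro u hu
  have hle' : ∀ v, v ≤ u₂ → (θ v).app X ≤ 0 := by
    intro v hv
    have := negS_backward hG hθ h ⊤ (strict_top hG hX) v hv
    rwa [app_congr (θ v) (Submodule.topEquiv (M := X))] at this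
  by_contra hcon
  push_neg at hcon
  have hu0 : (θ u).app X = 0 := le_antisymm (hle' u hu.le) hcon
  set f : ℝ → ℝ := fun s => (θ s).val (ModuleCat.of R X) with hf
  have hmax : IsLocalMax f u := by
    filter_upwards [isOpen_Iio.mem_nhds hu] with v hv
    have : f u = 0 := hu0
    rw [this]
    exact hle' v (le_of_lt hv)
  have hderiv : deriv f u = 0 := hmax.deriv_eq_zero
  have hss : memW G (θ u) X := by
    refine ⟨hX, hu0, fun B hB => ?_⟩
    exact negS_backward hG hθ h B hB u hu.le
  exact absurd (hθ.green u (ModuleCat.of R X) hns hss) (by rw [hderiv]; exact lt_irrefl 0)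

/-- semistable objects satisfy `PosQ`. -/
theorem w_posQ {s : ℝ} {X : Type} [AddCommGroup X] [Module R X] [Module.Finite R X]
    (hW : memW G (θ s) X) : PosQ G (θ s) X := by
  intro B hB
  have hadd := app_add (θ s) B
  have := hW.2.2 B hB
  rw [hW.2.1] at hadd
  linarith

/-- semistable objects satisfy `NegS`. -/
theorem w_negS {s : ℝ} {X : Type} [AddCommGroup X] [Module R X]
    (hW : memW G (θ s) X) : NegS G (θ s) X := fun B hB => hW.2.2 B hB


end Statement19Aux

theorem statement_19 (k : Type) [Field k] [Algebra k R] [FiniteDimensional k R]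
    (G : ModuleCat.{0} R → Prop) (hG : IsTorsionClass G)
    (hfin : ∀ M : ModuleCat.{0} R, G M → Module.Finite R ↥M)
    (θ : ℝ → StabilityCondition R) (hθ : IsGreenPath G θ) (t₀ : ℝ)
    (M : ModuleCat.{0} R) (hM : G M)
    (m : ℕ) (t : Fin m → ℝ) (c : Fin (m + 1) → Submodule R ↥M)
    (hc : IsSliceFiltration G (fun s (N : ModuleCat.{0} R) => memW G (θ s) ↥N) m t c) :
    (memP G (θ t₀) ↥M ↔ ∀ k : Fin m, t k < t₀) ∧
    (memQ G (θ t₀) ↥M ↔ ∀ k : Fin m, t₀ < t k) := by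
  obtain ⟨hc0, hclast, hcanti, htanti, hstrict, hW⟩ := hc
  haveI hNR : IsNoetherianRing R := isNoetherian_of_tower k (inferInstance : IsNoetherian k R)
  haveI hAR : IsArtinianRing R := isArtinian_of_tower k (inferInstance : IsArtinian k R)
  haveI hMfin : Module.Finite R ↥M := hfin M hM
  have hMemM : Mem G ↥M := hM
  have hWk : ∀ k' : Fin m, memW G (θ (t k'))
      (↥(c k'.castSucc) ⧸ Submodule.comap (c k'.castSucc).subtype (c k'.succ)) :=
    fun k' => hW k'
  -- basic facts about the filtration
  have hbotlt : 0 < m → (⊥ : Submodule R ↥M) < ⊤ := by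
    intro hm0
    have h01 : (0 : Fin (m+1)) < Fin.last m := by
      rw [Fin.lt_def]
      simp [hm0]
    have := hcanti h01
    rwa [hc0, hclast] at this
  have hnsM : 0 < m → ¬Subsingleton ↥M := by
    intro hm0 hsub
    have hlt := hbotlt hm0
    have hle : (⊤ : Submodule R ↥M) ≤ ⊥ := fun x _ => by
      rw [Subsingleton.elim x 0]
      exact Submodule.zero_mem ⊥
    exact absurd (lt_of_lt_of_le hlt hle) (lt_irrefl ⊥)
  have hMsub : m = 0 → Subsingleton ↥M := by
    intro hm0
    have hTB : (⊤ : Submodule R ↥M) = ⊥ := by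
      rw [← hc0, ← hclast]
      congr 1
      apply Fin.ext
      simp [hm0]
    constructor
    intro a b
    have ha : a = 0 := by
      have : a ∈ (⊥ : Submodule R ↥M) := by rw [← hTB]; trivial
      simpa using this
    have hb : b = 0 := by
      have : b ∈ (⊥ : Submodule R ↥M) := by rw [← hTB]; trivial
      simpa using this
    rw [ha, hb]
  -- telescoping steps
  have quot_step : ∀ (k' : Fin m) (u : ℝ),
      (θ u).app (↥M ⧸ c k'.succ) =
        (θ u).app (↥(c k'.castSucc) ⧸ Submodule.comap (c k'.castSucc).subtype (c k'.succ)) +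
        (θ u).app (↥M ⧸ c k'.castSucc) := by
    intro k' u
    have hle : c k'.succ ≤ c k'.castSucc := (hcanti (Fin.castSucc_lt_succ (i := k'))).le
    have hadd := app_add (θ u) (Submodule.map (c k'.succ).mkQ (c k'.castSucc))
    have h1 : (θ u).app ↥(Submodule.map (c k'.succ).mkQ (c k'.castSucc)) =
        (θ u).app (↥(c k'.castSucc) ⧸ Submodule.comap (c k'.castSucc).subtype (c k'.succ)) :=
      (app_congr (θ u) (quotCompEquiv (c k'.succ) (c k'.castSucc))).symm
    have h2 : (θ u).app ((↥M ⧸ c k'.succ) ⧸ Submodule.map (c k'.succ).mkQ (c k'.castSucc)) =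
        (θ u).app (↥M ⧸ c k'.castSucc) :=
      app_congr (θ u) (Submodule.quotientQuotientEquivQuotient (c k'.succ) (c k'.castSucc) hle)
    linarith
  have sub_step : ∀ (k' : Fin m) (u : ℝ),
      (θ u).app ↥(c k'.castSucc) = (θ u).app ↥(c k'.succ) +
        (θ u).app (↥(c k'.castSucc) ⧸ Submodule.comap (c k'.castSucc).subtype (c k'.succ)) := by
    intro k' u
    have hle : c k'.succ ≤ c k'.castSucc := (hcanti (Fin.castSucc_lt_succ (i := k'))).le
    have hadd := app_add (θ u) (Submodule.comap (c k'.castSucc).subtype (c k'.succ))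
    have h1 : (θ u).app ↥(Submodule.comap (c k'.castSucc).subtype (c k'.succ)) =
        (θ u).app ↥(c k'.succ) :=
      app_congr (θ u) ((comapSubtypeEquiv (c k'.castSucc) (c k'.succ)).trans
        (LinearEquiv.ofEq _ _ (inf_eq_right.mpr hle)))
    linarith
  -- forward telescoping: quotients nonpositive at early times
  have Hq : ∀ (j : ℕ) (hj : j < m + 1) (u : ℝ), (∀ i : Fin m, (i : ℕ) < j → u ≤ t i) →
      (θ u).app (↥M ⧸ c ⟨j, hj⟩) ≤ 0 := by
    intro j
    induction j with
    | zero =>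
      intro hj u _
      have htop : c ⟨0, hj⟩ = ⊤ := by
        have : (⟨0, hj⟩ : Fin (m+1)) = 0 := by apply Fin.ext; simp
        rw [this, hc0]
      rw [app_congr (θ u) (Submodule.quotEquivOfEq _ _ htop), app_quot_top]
    | succ j IH =>
      intro hj u hcond
      have hjm : j < m := by omega
      set k' : Fin m := ⟨j, hjm⟩ with hk'
      have hQ := quot_step k' u
      have hpiece : (θ u).app
          (↥(c k'.castSucc) ⧸ Submodule.comap (c k'.castSucc).subtype (c k'.succ)) ≤ 0 := by
        have huk : u ≤ t k' := hcond k' (by show j < j + 1; omega)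
        have := negS_backward hG hθ (w_negS (hWk k')) ⊤ (strict_top hG (hWk k').1) u huk
        rwa [app_congr (θ u) Submodule.topEquiv] at this
      have hrest : (θ u).app (↥M ⧸ c k'.castSucc) ≤ 0 :=
        IH (by omega) u (fun i hi => hcond i (by omega))
      show (θ u).app (↥M ⧸ c k'.succ) ≤ 0
      linarith
  -- backward telescoping: subobjects nonnegative at late times
  have Hs : ∀ (d : ℕ) (hd : d ≤ m) (u : ℝ), (∀ i : Fin m, m - d ≤ (i : ℕ) → t i ≤ u) →
      0 ≤ (θ u).app ↥(c ⟨m - d, by omega⟩) := by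
    intro d
    induction d with
    | zero =>
      intro hd u _
      have hbot : c ⟨m - 0, by omega⟩ = ⊥ := by
        have : (⟨m - 0, by omega⟩ : Fin (m+1)) = Fin.last m := by apply Fin.ext; simp
        rw [this, hclast]
      rw [app_congr (θ u) (LinearEquiv.ofEq _ _ hbot), app_bot]
    | succ d IH =>
      intro hd u hcond
      have hjm : m - (d+1) < m := by omega
      set k' : Fin m := ⟨m - (d+1), hjm⟩ with hk'
      have hidx : k'.succ = (⟨m - d, by omega⟩ : Fin (m+1)) := by
        apply Fin.ext
        show (m - (d+1)) + 1 = m - d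
        omega
      have hS := sub_step k' u
      have h1 : 0 ≤ (θ u).app ↥(c k'.succ) := by
        rw [hidx]
        exact IH (by omega) u (fun i hi => hcond i (by omega))
      have hpiece : 0 ≤ (θ u).app
          (↥(c k'.castSucc) ⧸ Submodule.comap (c k'.castSucc).subtype (c k'.succ)) := by
        have huk : t k' ≤ u := hcond k' (by show m - (d+1) ≤ m - (d+1); omega)
        have := posQ_forward hG hθ (hWk k').1 (w_posQ (hWk k')) ⊥ (strict_bot hG) u huk
        rwa [app_congr (θ u) (Submodule.quotEquivOfEqBot _ rfl)] at this
      show 0 ≤ (θ u).app ↥(c k'.castSucc)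
      linarith
  constructor
  · -- the 𝒫 statement
    constructor
    · intro hP k0
      by_contra hk
      push_neg at hk
      rcases hP.2 with hsub | ⟨hval, hquot⟩
      · exact (hnsM k0.pos) hsub
      · have hne : c k0.succ ≠ ⊤ := by
          intro hEq
          have hEq2 : c k0.succ = c 0 := by rw [hEq, hc0]
          exact (Fin.succ_ne_zero k0) (hcanti.injective hEq2)
        have hpos := hquot (c k0.succ) (hstrict k0.succ) hne
        have hcondq : ∀ i : Fin m, (i : ℕ) < (k0 : ℕ) + 1 → t₀ ≤ t i := by
          intro i hi
          refine le_trans hk (htanti.antitone ?_)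
          rw [Fin.le_def]
          omega
        have hHq := Hq ((k0 : ℕ) + 1) (by omega) t₀ hcondq
        have hidx : (⟨(k0 : ℕ) + 1, by omega⟩ : Fin (m+1)) = k0.succ := by
          apply Fin.ext; simp
        rw [hidx] at hHq
        linarith
    · intro hall
      refine ⟨hMemM, ?_⟩
      rcases Nat.eq_zero_or_pos m with hm0 | hm0
      · exact Or.inl (hMsub hm0)
      right
      set k0 : Fin m := ⟨0, hm0⟩ with hk0
      have hpiecePosQ : ∀ k' : Fin m, PosQ G (θ (t k0))
          (↥(c k'.castSucc) ⧸ Submodule.comap (c k'.castSucc).subtype (c k'.succ)) := by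
        intro k' B hB
        refine posQ_forward hG hθ (hWk k').1 (w_posQ (hWk k')) B hB (t k0)
          (htanti.antitone ?_)
        rw [Fin.le_def]
        exact Nat.zero_le _
      have Hpb : ∀ (j : ℕ) (hj : j < m + 1), PosQ G (θ (t k0)) (↥M ⧸ c ⟨j, hj⟩) := by
        intro j
        induction j with
        | zero =>
          intro hj B hB
          have htop : c ⟨0, hj⟩ = ⊤ := by
            have : (⟨0, hj⟩ : Fin (m+1)) = 0 := by apply Fin.ext; simp
            rw [this, hc0]
          haveI hsub : Subsingleton (↥M ⧸ c ⟨0, hj⟩) :=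
            Submodule.Quotient.subsingleton_iff.2 htop
          haveI : Subsingleton ((↥M ⧸ c ⟨0, hj⟩) ⧸ B) :=
            (Submodule.mkQ_surjective B).subsingleton
          rw [app_subsingleton (θ (t k0)) this]
        | succ j IH =>
          intro hj
          have hjm : j < m := by omega
          set k' : Fin m := ⟨j, hjm⟩ with hk'
          have hle : c k'.succ ≤ c k'.castSucc := (hcanti (Fin.castSucc_lt_succ (i := k'))).le
          have hA : IsStrictSub G (Submodule.map (c k'.succ).mkQ (c k'.castSucc)) :=
            strict_map_mkQ hG (hstrict k'.succ) (hstrict k'.castSucc)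
          have hPA : PosQ G (θ (t k0)) ↥(Submodule.map (c k'.succ).mkQ (c k'.castSucc)) :=
            PosQ_congr hG (quotCompEquiv (c k'.succ) (c k'.castSucc)) (hpiecePosQ k')
          have hPQ : PosQ G (θ (t k0))
              ((↥M ⧸ c k'.succ) ⧸ Submodule.map (c k'.succ).mkQ (c k'.castSucc)) :=
            PosQ_congr hG
              (Submodule.quotientQuotientEquivQuotient (c k'.succ) (c k'.castSucc) hle).symm
              (IH (by omega))
          exact PosQ_ext hG hA hPA hPQ
      have hPosM : PosQ G (θ (t k0)) ↥M := by
        have hP := Hpb m (by omega)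
        have hbot : c ⟨m, by omega⟩ = ⊥ := by
          have : (⟨m, by omega⟩ : Fin (m+1)) = Fin.last m := by apply Fin.ext; simp
          rw [this, hclast]
        exact PosQ_congr hG (Submodule.quotEquivOfEqBot _ hbot) hP
      refine ⟨?_, ?_⟩
      · exact pos_of_posQ hG hθ hMemM hPosM (hnsM hm0) t₀ (hall k0)
      · intro A hA hAne
        have hPQA : PosQ G (θ (t k0)) (↥M ⧸ A) := PosQ_quot hG hA hPosM
        have hMemA : Mem G (↥M ⧸ A) := hG.quot_closed _ _ hMemM
        have hnsub : ¬Subsingleton (↥M ⧸ A) := fun hs =>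
          hAne (Submodule.Quotient.subsingleton_iff.1 hs)
        exact pos_of_posQ hG hθ hMemA hPQA hnsub t₀ (hall k0)
  · -- the 𝒬 statement
    constructor
    · intro hQ k0
      by_contra hk
      push_neg at hk
      rcases hQ.2 with hsub | ⟨hval, hsubs⟩
      · exact (hnsM k0.pos) hsub
      · have hne : c k0.castSucc ≠ ⊥ := by
          intro hEq
          have hEq2 : c k0.castSucc = c (Fin.last m) := by rw [hEq, hclast]
          exact absurd (hcanti.injective hEq2) (ne_of_lt (Fin.castSucc_lt_last k0))
        have hneg := hsubs (c k0.castSucc) (hstrict k0.castSucc) hne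
        have hcond : ∀ i : Fin m, m - (m - (k0 : ℕ)) ≤ (i : ℕ) → t i ≤ t₀ := by
          intro i hi
          refine le_trans (htanti.antitone ?_) hk
          rw [Fin.le_def]
          omega
        have hHs := Hs (m - (k0 : ℕ)) (by omega) t₀ hcond
        have hidx : (⟨m - (m - (k0 : ℕ)), by omega⟩ : Fin (m+1)) = k0.castSucc := by
          apply Fin.ext
          simp [Fin.coe_castSucc]
          omega
        rw [hidx] at hHs
        linarith
    · intro hall
      refine ⟨hMemM, ?_⟩
      rcases Nat.eq_zero_or_pos m with hm0 | hm0
      · exact Or.inl (hMsub hm0)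
      right
      set km : Fin m := ⟨m - 1, by omega⟩ with hkm
      have hkmax : ∀ k' : Fin m, t km ≤ t k' := by
        intro k'
        refine htanti.antitone ?_
        rw [Fin.le_def]
        show (k' : ℕ) ≤ m - 1
        have := k'.isLt
        omega
      have hpieceNegS : ∀ k' : Fin m, NegS G (θ (t km))
          (↥(c k'.castSucc) ⧸ Submodule.comap (c k'.castSucc).subtype (c k'.succ)) :=
        fun k' B hB => negS_backward hG hθ (w_negS (hWk k')) B hB (t km) (hkmax k')
      have Hnb : ∀ (d : ℕ) (hd : d ≤ m), NegS G (θ (t km)) ↥(c ⟨m - d, by omega⟩) := by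
        intro d
        induction d with
        | zero =>
          intro hd B hB
          have hbot : c ⟨m - 0, by omega⟩ = ⊥ := by
            have : (⟨m - 0, by omega⟩ : Fin (m+1)) = Fin.last m := by apply Fin.ext; simp
            rw [this, hclast]
          haveI hsubamb : Subsingleton ↥(c ⟨m - 0, by omega⟩) := by
            rw [hbot]
            infer_instance
          haveI : Subsingleton ↥B := ⟨fun a b => Subtype.ext (Subsingleton.elim _ _)⟩
          rw [app_subsingleton (θ (t km)) this]
        | succ d IH =>
          intro hd
          have hjm : m - (d+1) < m := by omega
          set k' : Fin m := ⟨m - (d+1), hjm⟩ with hk'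
          have hle : c k'.succ ≤ c k'.castSucc := (hcanti (Fin.castSucc_lt_succ (i := k'))).le
          have hidx : k'.succ = (⟨m - d, by omega⟩ : Fin (m+1)) := by
            apply Fin.ext
            show (m - (d+1)) + 1 = m - d
            omega
          have hAs : IsStrictSub G (Submodule.comap (c k'.castSucc).subtype (c k'.succ)) :=
            strict_comap_subtype hG (hstrict k'.castSucc) (hstrict k'.succ)
          have hNA : NegS G (θ (t km)) ↥(Submodule.comap (c k'.castSucc).subtype (c k'.succ)) := by
            have hIH := IH (by omega)
            rw [← hidx] at hIH
            exact NegS_congr hG ((comapSubtypeEquiv (c k'.castSucc) (c k'.succ)).trans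
              (LinearEquiv.ofEq _ _ (inf_eq_right.mpr hle))).symm hIH
          exact NegS_ext hG hAs hNA (hpieceNegS k')
      have hNegM : NegS G (θ (t km)) ↥M := by
        have hN := Hnb m (le_refl m)
        have hidx0 : (⟨m - m, by omega⟩ : Fin (m+1)) = 0 := by apply Fin.ext; simp
        rw [hidx0, hc0] at hN
        exact NegS_congr hG Submodule.topEquiv hN
      refine ⟨?_, ?_⟩
      · exact neg_of_negS hG hθ hMemM hNegM (hnsM hm0) t₀ (hall km)
      · intro A hA hAne
        have hNA : NegS G (θ (t km)) ↥A := NegS_sub hG hA hNegM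
        haveI : Nontrivial ↥A := Submodule.nontrivial_iff_ne_bot.2 hAne
        exact neg_of_negS hG hθ hA.1 hNA (not_subsingleton ↥A) t₀ (hall km)

end PaperTC
end
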